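/- arXiv:2010.06951 — 4 statements merged into one kernel-verified Lean document; each statement's English description precedes it below -/
import Mathlib

section
/- Let φ : 𝔻 → 𝔻 be analytic with φ(0)=0, not the identity and not an elliptic automorphism, and suppose limsup_{|z|→1} (1-|z|)/(1-|φ(z)|) = 0 (i.e., φ has no finite angular derivative at any boundary point in this sense). Then for every sequence r_n ↑ 1, lim_{n→∞} sup_{|z|>r_n} (1-|z|)/(1-|φ_n(z)|) = 0. -/
open Metric Set Filter

/-- An elliptic automorphism of the unit disk: an analytic automorphism of the disk
with a fixed point inside the disk. -/
def IsEllipticAutomorphism (φ : ℂ → ℂ) : Prop :=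
  ∃ ψ : ℂ → ℂ, DifferentiableOn ℂ ψ (ball (0:ℂ) 1) ∧
    MapsTo ψ (ball (0:ℂ) 1) (ball (0:ℂ) 1) ∧
    (∀ z ∈ ball (0:ℂ) 1, ψ (φ z) = z ∧ φ (ψ z) = z) ∧
    ∃ z ∈ ball (0:ℂ) 1, φ z = z

/-- Schwarz iterate bound. -/
lemma iterate_norm_le (φ : ℂ → ℂ)
    (hd : DifferentiableOn ℂ φ (ball (0:ℂ) 1))
    (hm : MapsTo φ (ball (0:ℂ) 1) (ball (0:ℂ) 1))
    (h0 : φ 0 = 0) :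
    ∀ n, ∀ z ∈ ball (0:ℂ) 1, ‖φ^[n] z‖ ≤ ‖z‖ := by
  intro n
  induction n with
  | zero => intro z _; simp
  | succ k ih =>
    intro z hz
    have hk : φ^[k] z ∈ ball (0:ℂ) 1 := by
      rw [mem_ball_zero_iff]
      exact lt_of_le_of_lt (ih z hz) (mem_ball_zero_iff.1 hz)
    calc ‖φ^[k+1] z‖ = ‖φ (φ^[k] z)‖ := by rw [Function.iterate_succ_apply']
      _ ≤ ‖φ^[k] z‖ := by
          simpa using Complex.norm_le_norm_of_mapsTo_ball hd (hm.mono_right ball_subset_closedBall) h0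
            (mem_ball_zero_iff.1 hk)
      _ ≤ ‖z‖ := ih z hz

/-- If `φ` is an analytic self-map of the disk with `φ 0 = 0`, not the identity and
not an elliptic automorphism, and `(1-|z|)/(1-|φ z|) → 0` as `|z| → 1`, then for every
sequence `r_n ↑ 1`, `lim_n sup_{|z| > r_n} (1-|z|)/(1-|φ_n z|) = 0`. -/
theorem no_angular_derivative_implies_weight_condition (φ : ℂ → ℂ)
    (hd : DifferentiableOn ℂ φ (ball (0:ℂ) 1))
    (hm : MapsTo φ (ball (0:ℂ) 1) (ball (0:ℂ) 1))
    (h0 : φ 0 = 0)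
    (hni : ¬ EqOn φ id (ball (0:ℂ) 1))
    (hne : ¬ IsEllipticAutomorphism φ)
    (hlimsup : ∀ ε > (0:ℝ), ∃ δ < (1:ℝ), ∀ z ∈ ball (0:ℂ) 1, δ < ‖z‖ →
        (1 - ‖z‖) / (1 - ‖φ z‖) < ε) :
    ∀ r : ℕ → ℝ, (∀ n, r n < 1) → Monotone r → Tendsto r atTop (nhds 1) →
      Tendsto (fun n : ℕ =>
          sSup {x : ℝ | ∃ z ∈ ball (0:ℂ) 1, r n < ‖z‖ ∧
            x = (1 - ‖z‖) / (1 - ‖φ^[n] z‖)})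
        atTop (nhds 0) := by
  intro r hr1 hrmono hrt
  rw [Metric.tendsto_atTop]
  intro ε hε
  obtain ⟨δ, hδ1, hδ⟩ := hlimsup (ε/2) (by linarith)
  have hev : ∀ᶠ n in atTop, δ < r n := hrt.eventually (eventually_gt_nhds hδ1)
  have hev1 : ∀ᶠ n in atTop, 1 ≤ n := eventually_ge_atTop 1
  obtain ⟨N, hN⟩ := (hev.and hev1).exists_forall_of_atTop
  refine ⟨N, fun n hn => ?_⟩
  obtain ⟨hδrn, hn1⟩ := hN n hn
  set S := {x : ℝ | ∃ z ∈ ball (0:ℂ) 1, r n < ‖z‖ ∧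
      x = (1 - ‖z‖) / (1 - ‖φ^[n] z‖)}
  -- key: every element of S is in [0, ε/2]
  have hbound : ∀ x ∈ S, 0 ≤ x ∧ x ≤ ε/2 := by
    rintro x ⟨z, hz, hrz, rfl⟩
    have hz1 : ‖z‖ < 1 := mem_ball_zero_iff.1 hz
    have hφz : ‖φ z‖ < 1 := mem_ball_zero_iff.1 (hm hz)
    have hδz : δ < ‖z‖ := lt_trans hδrn hrz
    have hkey : ‖φ^[n] z‖ ≤ ‖φ z‖ := by
      obtain ⟨m, rfl⟩ := Nat.exists_eq_add_of_le hn1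
      rw [add_comm, Function.iterate_add_apply, Function.iterate_one]
      exact iterate_norm_le φ hd hm h0 m (φ z) (hm hz)
    have h1 : (0:ℝ) < 1 - ‖φ z‖ := by linarith
    have h2 : (0:ℝ) < 1 - ‖φ^[n] z‖ := by linarith
    have hnum : (0:ℝ) ≤ 1 - ‖z‖ := by linarith
    constructor
    · positivity
    · calc (1 - ‖z‖) / (1 - ‖φ^[n] z‖) ≤ (1 - ‖z‖) / (1 - ‖φ z‖) :=
            div_le_div_of_nonneg_left hnum h1 (by linarith)
        _ ≤ ε/2 := le_of_lt (hδ z hz hδz)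
  have hSne : S.Nonempty := by
    set t := max (r n) 0 with ht
    have ht1 : t < 1 := max_lt (hr1 n) one_pos
    have ht0 : 0 ≤ t := le_max_right _ _
    refine ⟨_, ((t+1)/2 : ℝ), ?_, ?_, rfl⟩
    · rw [mem_ball_zero_iff]
      rw [Complex.norm_real, Real.norm_eq_abs, abs_of_nonneg (by linarith)]
      linarith
    · rw [Complex.norm_real, Real.norm_eq_abs, abs_of_nonneg (by linarith)]
      have : r n ≤ t := le_max_left _ _
      linarith
  have hbdd : BddAbove S := ⟨ε/2, fun x hx => (hbound x hx).2⟩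
  have hle : sSup S ≤ ε/2 := csSup_le hSne (fun x hx => (hbound x hx).2)
  obtain ⟨x₀, hx₀⟩ := hSne
  have hge : 0 ≤ sSup S := le_trans (hbound x₀ hx₀).1 (le_csSup hbdd hx₀)
  rw [Real.dist_eq, abs_of_nonneg (by simpa using hge)]
  simp only [sub_zero]
  linarith
end

section
/- Let φ : 𝔻 → 𝔻 be analytic with φ(0)=0, and suppose lim_{n→∞} sup_{z∈𝔻} |φ_n(z)| = 0. Then C_φ is uniformly mean ergodic on H^∞(𝔻): the Cesàro means M_n(C_φ) = (1/n)∑_{j=1}^n C_{φ_j} converge in operator norm to the rank-one operator K_0 : f ↦ f(0)·1. -/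
open Metric Set Filter Finset

set_option maxHeartbeats 1000000 in
/-- If `sup_z |φ_n z| → 0`, then `C_φ` is uniformly mean ergodic on `H^∞(𝔻)`:
the operator norms of `M_n(C_φ) - K_0` (expressed as a double supremum over the unit
ball of `H^∞` and the disk) tend to `0`. -/
theorem uniformly_mean_ergodic_Hinf (φ : ℂ → ℂ)
    (hd : DifferentiableOn ℂ φ (ball (0:ℂ) 1))
    (hm : MapsTo φ (ball (0:ℂ) 1) (ball (0:ℂ) 1))
    (h0 : φ 0 = 0)
    (hsup : Tendsto (fun n : ℕ => sSup {x : ℝ | ∃ z ∈ ball (0:ℂ) 1, x = ‖φ^[n] z‖})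
      atTop (nhds 0)) :
    Tendsto (fun n : ℕ =>
        sSup {x : ℝ | ∃ f : ℂ → ℂ, DifferentiableOn ℂ f (ball (0:ℂ) 1) ∧
          (∀ z ∈ ball (0:ℂ) 1, ‖f z‖ ≤ 1) ∧
          x = sSup {y : ℝ | ∃ z ∈ ball (0:ℂ) 1,
            y = ‖(n : ℂ)⁻¹ • (∑ j ∈ Icc 1 n, f (φ^[j] z)) - f 0‖}})
      atTop (nhds 0) := by
  set S : ℕ → ℝ := fun n => sSup {x : ℝ | ∃ z ∈ ball (0:ℂ) 1, x = ‖φ^[n] z‖} with hSdef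
  have hball0 : (0:ℂ) ∈ ball (0:ℂ) 1 := by simp
  have hiter : ∀ n, MapsTo φ^[n] (ball (0:ℂ) 1) (ball (0:ℂ) 1) := fun n => hm.iterate n
  have hzero : ∀ n, φ^[n] 0 = 0 := fun n => Function.iterate_fixed h0 n
  have hSbdd : ∀ n, BddAbove {x : ℝ | ∃ z ∈ ball (0:ℂ) 1, x = ‖φ^[n] z‖} := by
    intro n
    refine ⟨1, ?_⟩
    rintro x ⟨z, hz, rfl⟩
    exact le_of_lt (mem_ball_zero_iff.1 (hiter n hz))
  have hSle : ∀ n, ∀ z ∈ ball (0:ℂ) 1, ‖φ^[n] z‖ ≤ S n := fun n z hz =>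
    le_csSup (hSbdd n) ⟨z, hz, rfl⟩
  have hSnn : ∀ n, 0 ≤ S n := fun n => by
    simpa [hzero n] using hSle n 0 hball0
  -- Schwarz-type bound
  have key : ∀ f : ℂ → ℂ, DifferentiableOn ℂ f (ball (0:ℂ) 1) →
      (∀ z ∈ ball (0:ℂ) 1, ‖f z‖ ≤ 1) → ∀ w ∈ ball (0:ℂ) 1, ‖f w - f 0‖ ≤ 3 * ‖w‖ := by
    intro f hdf hbf w hw
    have hmaps : MapsTo f (ball (0:ℂ) 1) (ball (f 0) 3) := by
      intro z hz
      have h1 := hbf z hz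
      have h2 := hbf 0 hball0
      rw [mem_ball, dist_eq_norm]
      calc ‖f z - f 0‖ ≤ ‖f z‖ + ‖f 0‖ := norm_sub_le _ _
        _ < 3 := by linarith
    have := Complex.dist_le_div_mul_dist_of_mapsTo_ball hdf (hmaps.mono_right ball_subset_closedBall) hw
    simpa [dist_eq_norm] using this
  -- the main pointwise bound
  have hmain : ∀ n : ℕ, 1 ≤ n → ∀ f : ℂ → ℂ, DifferentiableOn ℂ f (ball (0:ℂ) 1) →
      (∀ z ∈ ball (0:ℂ) 1, ‖f z‖ ≤ 1) → ∀ z ∈ ball (0:ℂ) 1,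
      ‖(n : ℂ)⁻¹ • (∑ j ∈ Icc 1 n, f (φ^[j] z)) - f 0‖ ≤ (n:ℝ)⁻¹ * ∑ j ∈ Icc 1 n, 3 * S j := by
    intro n hn f hdf hbf z hz
    have hnC : (n:ℂ) ≠ 0 := Nat.cast_ne_zero.2 (by omega)
    have hrw : (n : ℂ)⁻¹ • (∑ j ∈ Icc 1 n, f (φ^[j] z)) - f 0
        = (n : ℂ)⁻¹ • (∑ j ∈ Icc 1 n, (f (φ^[j] z) - f 0)) := by
      rw [Finset.sum_sub_distrib, smul_sub]
      congr 1
      rw [Finset.sum_const, Nat.card_Icc, Nat.add_sub_cancel, nsmul_eq_mul, smul_eq_mul]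
      field_simp
    rw [hrw, norm_smul, norm_inv, Complex.norm_natCast]
    refine mul_le_mul_of_nonneg_left ?_ (by positivity)
    calc ‖∑ j ∈ Icc 1 n, (f (φ^[j] z) - f 0)‖ ≤ ∑ j ∈ Icc 1 n, ‖f (φ^[j] z) - f 0‖ :=
          norm_sum_le _ _
      _ ≤ ∑ j ∈ Icc 1 n, 3 * S j := by
          refine Finset.sum_le_sum fun j _ => ?_
          refine (key f hdf hbf _ (hiter j hz)).trans ?_
          have := hSle j z hz
          linarith
  -- nonemptiness and boundedness of the outer set
  have hzeromem : ∀ n : ℕ, (0:ℝ) ∈ {x : ℝ | ∃ f : ℂ → ℂ, DifferentiableOn ℂ f (ball (0:ℂ) 1) ∧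
      (∀ z ∈ ball (0:ℂ) 1, ‖f z‖ ≤ 1) ∧
      x = sSup {y : ℝ | ∃ z ∈ ball (0:ℂ) 1,
        y = ‖(n : ℂ)⁻¹ • (∑ j ∈ Icc 1 n, f (φ^[j] z)) - f 0‖}} := by
    intro n
    refine ⟨fun _ => 0, differentiableOn_const 0, by simp, ?_⟩
    refine Eq.symm (Eq.trans (congrArg sSup ?_) (csSup_singleton (0:ℝ)))
    ext y
    simp only [Set.mem_setOf_eq, Set.mem_singleton_iff]
    constructor
    · rintro ⟨z, hz, rfl⟩; simp
    · rintro rfl; exact ⟨0, hball0, by simp⟩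
  have hinnerne : ∀ n : ℕ, ∀ f : ℂ → ℂ, {y : ℝ | ∃ z ∈ ball (0:ℂ) 1,
      y = ‖(n : ℂ)⁻¹ • (∑ j ∈ Icc 1 n, f (φ^[j] z)) - f 0‖}.Nonempty :=
    fun n f => ⟨_, 0, hball0, rfl⟩
  have houterbdd : ∀ n : ℕ, BddAbove {x : ℝ | ∃ f : ℂ → ℂ, DifferentiableOn ℂ f (ball (0:ℂ) 1) ∧
      (∀ z ∈ ball (0:ℂ) 1, ‖f z‖ ≤ 1) ∧
      x = sSup {y : ℝ | ∃ z ∈ ball (0:ℂ) 1,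
        y = ‖(n : ℂ)⁻¹ • (∑ j ∈ Icc 1 n, f (φ^[j] z)) - f 0‖}} := by
    intro n
    refine ⟨2, ?_⟩
    rintro x ⟨f, hdf, hbf, rfl⟩
    refine csSup_le (hinnerne n f) ?_
    rintro y ⟨z, hz, rfl⟩
    have h1 : ‖(n : ℂ)⁻¹ • (∑ j ∈ Icc 1 n, f (φ^[j] z))‖ ≤ 1 := by
      rw [norm_smul, norm_inv, Complex.norm_natCast]
      calc (n:ℝ)⁻¹ * ‖∑ j ∈ Icc 1 n, f (φ^[j] z)‖
          ≤ (n:ℝ)⁻¹ * ∑ j ∈ Icc 1 n, (1:ℝ) := by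
            refine mul_le_mul_of_nonneg_left ?_ (by positivity)
            exact (norm_sum_le _ _).trans (Finset.sum_le_sum fun j _ => hbf _ (hiter j hz))
        _ = (n:ℝ)⁻¹ * n := by rw [Finset.sum_const, Nat.card_Icc, Nat.add_sub_cancel]; simp
        _ ≤ 1 := by
            rcases Nat.eq_zero_or_pos n with h | h
            · simp [h]
            · rw [inv_mul_cancel₀ (by positivity : ((n:ℝ)) ≠ 0)]
    calc ‖(n : ℂ)⁻¹ • (∑ j ∈ Icc 1 n, f (φ^[j] z)) - f 0‖
        ≤ ‖(n : ℂ)⁻¹ • (∑ j ∈ Icc 1 n, f (φ^[j] z))‖ + ‖f 0‖ := norm_sub_le _ _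
      _ ≤ 1 + 1 := add_le_add h1 (hbf 0 hball0)
      _ = 2 := by norm_num
  -- the majorant and its convergence
  have hB : Tendsto (fun n : ℕ => (n:ℝ)⁻¹ * ∑ j ∈ Icc 1 n, 3 * S j) atTop (nhds 0) := by
    have h1 : Tendsto (fun j : ℕ => 3 * S (1 + j)) atTop (nhds 0) := by
      have h := (hsup.comp (tendsto_add_atTop_nat 1)).const_mul (3:ℝ)
      rw [mul_zero] at h
      exact h.congr fun j => by simp [Function.comp, Nat.add_comm]
    have h2 := h1.cesaro
    refine h2.congr fun n => ?_
    congr 1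
    rw [← Finset.Ico_add_one_right_eq_Icc, Finset.sum_Ico_eq_sum_range]; simp
  -- squeeze
  refine tendsto_of_tendsto_of_tendsto_of_le_of_le' tendsto_const_nhds hB ?_ ?_
  · filter_upwards with n
    exact le_csSup (houterbdd n) (hzeromem n)
  · filter_upwards [Ici_mem_atTop 1] with n hn
    refine csSup_le ⟨0, hzeromem n⟩ ?_
    rintro x ⟨f, hdf, hbf, rfl⟩
    refine csSup_le (hinnerne n f) ?_
    rintro y ⟨z, hz, rfl⟩
    exact hmain n hn f hdf hbf z hz
end

section
/- Let ν be radial, decreasing, continuous with lim_{|z|→1} ν = 0, and φ : 𝔻 → 𝔻 analytic with φ(0)=0, such that for some sequence r_N ↑ 1, lim_N sup_{|z|>r_N} ν(|z|)/ν(|φ_N(z)|) = 0, and φ_n → 0 uniformly on compact subsets of 𝔻. Then lim_{n→∞} sup_{z∈𝔻} [ν(|z|)/ν(|φ_n(z)|)] |φ_n(z)| = 0. -/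
open Metric Set Filter

/-- Condition (1) together with `φ_n → 0` uniformly on compact subsets implies
`sup_z [ν(|z|)/ν(|φ_n z|)]|φ_n z| → 0`. -/
theorem weight_condition_implies_sup_null (ν : ℝ → ℝ)
    (hνc : ContinuousOn ν (Ico (0:ℝ) 1))
    (hνpos : ∀ t ∈ Ico (0:ℝ) 1, 0 < ν t)
    (hνdec : AntitoneOn ν (Ico (0:ℝ) 1))
    (hν0 : Tendsto ν (nhdsWithin 1 (Iio (1:ℝ))) (nhds 0))
    (φ : ℂ → ℂ)
    (hd : DifferentiableOn ℂ φ (ball (0:ℂ) 1))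
    (hm : MapsTo φ (ball (0:ℂ) 1) (ball (0:ℂ) 1))
    (h0 : φ 0 = 0)
    (r : ℕ → ℝ) (hr1 : ∀ N, r N < 1) (hrmono : Monotone r)
    (hrlim : Tendsto r atTop (nhds 1))
    (hcond : Tendsto (fun N : ℕ =>
        sSup {x : ℝ | ∃ z ∈ ball (0:ℂ) 1, r N < ‖z‖ ∧
          x = ν ‖z‖ / ν ‖φ^[N] z‖}) atTop (nhds 0))
    (hcpt : ∀ K : Set ℂ, K ⊆ ball (0:ℂ) 1 → IsCompact K →
      TendstoUniformlyOn (fun n z => φ^[n] z) 0 atTop K) :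
    Tendsto (fun n : ℕ =>
        sSup {x : ℝ | ∃ z ∈ ball (0:ℂ) 1,
          x = ν ‖z‖ / ν ‖φ^[n] z‖ * ‖φ^[n] z‖}) atTop (nhds 0) := by
  -- basic facts
  have hiter_mem : ∀ n, ∀ z ∈ ball (0:ℂ) 1, φ^[n] z ∈ ball (0:ℂ) 1 := fun n =>
    hm.iterate n
  have hschwarz : ∀ z ∈ ball (0:ℂ) 1, ‖φ z‖ ≤ ‖z‖ := by
    intro z hz
    have := Complex.norm_le_norm_of_mapsTo_ball hd (hm.mono_right ball_subset_closedBall) h0 (mem_ball_zero_iff.1 hz)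
    simpa using this
  -- ‖φ^[n] z‖ is antitone in n
  have hantit : ∀ z ∈ ball (0:ℂ) 1, ∀ N n, N ≤ n → ‖φ^[n] z‖ ≤ ‖φ^[N] z‖ := by
    intro z hz N n hNn
    have : Antitone (fun k => ‖φ^[k] z‖) := by
      apply antitone_nat_of_succ_le
      intro k
      rw [Function.iterate_succ_apply']
      exact hschwarz _ (hiter_mem k z hz)
    exact this hNn
  have hle_z : ∀ z ∈ ball (0:ℂ) 1, ∀ n, ‖φ^[n] z‖ ≤ ‖z‖ := by
    intro z hz n
    simpa using hantit z hz 0 n (Nat.zero_le n)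
  have hmemIco : ∀ z ∈ ball (0:ℂ) 1, ‖z‖ ∈ Ico (0:ℝ) 1 := fun z hz =>
    ⟨norm_nonneg z, mem_ball_zero_iff.1 hz⟩
  -- the ratio is ≤ 1 and positive
  have hratio_le_one : ∀ n, ∀ z ∈ ball (0:ℂ) 1, ν ‖z‖ / ν ‖φ^[n] z‖ ≤ 1 := by
    intro n z hz
    have h1 := hmemIco _ (hiter_mem n z hz)
    rw [div_le_one (hνpos _ h1)]
    exact hνdec h1 (hmemIco z hz) (hle_z z hz n)
  have hratio_pos : ∀ n, ∀ z ∈ ball (0:ℂ) 1, 0 < ν ‖z‖ / ν ‖φ^[n] z‖ := fun n z hz =>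
    div_pos (hνpos _ (hmemIco z hz)) (hνpos _ (hmemIco _ (hiter_mem n z hz)))
  rw [Metric.tendsto_atTop]
  intro ε hε
  -- choose N with sup over |z| > r N of the ratio < ε/2
  obtain ⟨N, hN⟩ := (Metric.tendsto_atTop.1 hcond (ε/2) (by linarith)).imp
    (fun N h => h N le_rfl)
  set T := {x : ℝ | ∃ z ∈ ball (0:ℂ) 1, r N < ‖z‖ ∧ x = ν ‖z‖ / ν ‖φ^[N] z‖} with hT
  have hTsup : sSup T < ε/2 := lt_of_abs_lt (by simpa [Real.dist_eq] using hN)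
  have hTbdd : BddAbove T := by
    refine ⟨1, fun x hx => ?_⟩
    obtain ⟨z, hz, _, rfl⟩ := hx
    exact hratio_le_one N z hz
  -- uniform convergence on the closed ball of radius r N
  have hK : closedBall (0:ℂ) (r N) ⊆ ball (0:ℂ) 1 := closedBall_subset_ball (hr1 N)
  have hU := hcpt _ hK (isCompact_closedBall _ _)
  rw [Metric.tendstoUniformlyOn_iff] at hU
  obtain ⟨M, hM⟩ := (hU (ε/2) (by linarith)).exists_forall_of_atTop
  refine ⟨max N M, fun n hn => ?_⟩
  have hnN : N ≤ n := le_trans (le_max_left _ _) hn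
  have hnM : M ≤ n := le_trans (le_max_right _ _) hn
  set S := {x : ℝ | ∃ z ∈ ball (0:ℂ) 1, x = ν ‖z‖ / ν ‖φ^[n] z‖ * ‖φ^[n] z‖} with hS
  have hSne : (0:ℝ) ∈ S := by
    refine ⟨0, by simp, ?_⟩
    simp [Function.iterate_fixed h0]
  have hSle : ∀ x ∈ S, x ≤ ε/2 := by
    rintro x ⟨z, hz, rfl⟩
    by_cases hcase : r N < ‖z‖
    · -- use the condition
      have hx' : ν ‖z‖ / ν ‖φ^[N] z‖ ∈ T := ⟨z, hz, hcase, rfl⟩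
      have h1 : ν ‖z‖ / ν ‖φ^[n] z‖ ≤ ν ‖z‖ / ν ‖φ^[N] z‖ := by
        apply div_le_div_of_nonneg_left (le_of_lt (hνpos _ (hmemIco z hz)))
          (hνpos _ (hmemIco _ (hiter_mem N z hz)))
        exact hνdec (hmemIco _ (hiter_mem n z hz)) (hmemIco _ (hiter_mem N z hz))
          (hantit z hz N n hnN)
      calc ν ‖z‖ / ν ‖φ^[n] z‖ * ‖φ^[n] z‖
          ≤ ν ‖z‖ / ν ‖φ^[n] z‖ * 1 := by
            apply mul_le_mul_of_nonneg_left _ (le_of_lt (hratio_pos n z hz))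
            exact le_of_lt (mem_ball_zero_iff.1 (hiter_mem n z hz))
        _ = ν ‖z‖ / ν ‖φ^[n] z‖ := mul_one _
        _ ≤ ν ‖z‖ / ν ‖φ^[N] z‖ := h1
        _ ≤ sSup T := le_csSup hTbdd hx'
        _ ≤ ε/2 := le_of_lt hTsup
    · -- z in the compact set: φ^[n] z is small
      push_neg at hcase
      have hzK : z ∈ closedBall (0:ℂ) (r N) := by
        simpa [mem_closedBall, dist_zero_right] using hcase
      have := hM n hnM z hzK
      have hsmall : ‖φ^[n] z‖ < ε/2 := by
        simpa [dist_eq_norm] using this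
      calc ν ‖z‖ / ν ‖φ^[n] z‖ * ‖φ^[n] z‖
          ≤ 1 * ‖φ^[n] z‖ :=
            mul_le_mul_of_nonneg_right (hratio_le_one n z hz) (norm_nonneg _)
        _ = ‖φ^[n] z‖ := one_mul _
        _ ≤ ε/2 := le_of_lt hsmall
  have hSbdd : BddAbove S := ⟨ε/2, hSle⟩
  have h1 : sSup S ≤ ε/2 := csSup_le ⟨0, hSne⟩ hSle
  have h2 : 0 ≤ sSup S := le_csSup hSbdd hSne
  rw [Real.dist_eq]
  rw [abs_of_nonneg (by simpa using h2)]
  simpa using lt_of_le_of_lt h1 (by linarith)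
end

section
/- Let φ : 𝔻 → 𝔻 be analytic with φ(0)=0, φ not the identity and not an elliptic automorphism, satisfying condition (1): for some sequence r_n ↑ 1, lim_n sup_{|z|>r_n} ν(|z|)/ν(|φ_n(z)|) = 0, where ν is radial, decreasing, continuous, vanishing at the boundary. Then for every f in the unit ball of H^∞_ν(𝔻), lim_{n→∞} sup_{z∈𝔻} (1/n) ∑_{i=1}^n |f(φ_i(z)) − f(0)| ν(|z|) = 0. -/
open Metric Set Filter Finset

lemma aux_contraction {φ : ℂ → ℂ} (hd : DifferentiableOn ℂ φ (ball (0:ℂ) 1))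
    (hm : MapsTo φ (ball (0:ℂ) 1) (ball (0:ℂ) 1)) (h0 : φ 0 = 0)
    (hne : ¬ IsEllipticAutomorphism φ) {ρ : ℝ} (hρ0 : 0 ≤ ρ) (hρ1 : ρ < 1) :
    ∃ c : ℝ, 0 ≤ c ∧ c < 1 ∧ ∀ z : ℂ, ‖z‖ ≤ ρ → ‖φ z‖ ≤ c * ‖z‖ := by
  have hmaps : MapsTo φ (ball (0:ℂ) 1) (ball (φ 0) 1) := by rwa [h0]
  set g := dslope φ 0 with hg
  have hg_le : ∀ z ∈ ball (0:ℂ) 1, ‖g z‖ ≤ 1 := fun z hz => by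
    simpa using Complex.norm_dslope_le_div_of_mapsTo_ball hd (hmaps.mono_right ball_subset_closedBall) hz
  have hφ_eq : ∀ z : ℂ, z ∈ ball (0:ℂ) 1 → φ z = z * g z := by
    intro z hz
    rcases eq_or_ne z 0 with rfl | hz0
    · simp [h0]
    · rw [hg, dslope_of_ne _ hz0, slope_def_field, h0, sub_zero, sub_zero,
        mul_comm, div_mul_cancel₀ _ hz0]
  have hg_lt : ∀ z ∈ ball (0:ℂ) 1, ‖g z‖ < 1 := by
    intro z hz
    rcases lt_or_eq_of_le (hg_le z hz) with h | h
    · exact h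
    exfalso
    apply hne
    have heq := Complex.affine_of_mapsTo_ball_of_exists_norm_dslope_eq_div hd (hmaps.mono_right ball_subset_closedBall) hz
      (by simpa using h)
    set a := g z with ha
    have ha1 : ‖a‖ = 1 := h
    have ha0 : a ≠ 0 := by
      intro h'; rw [h'] at ha1; simp at ha1
    have hφ' : ∀ w ∈ ball (0:ℂ) 1, φ w = w * a := by
      intro w hw
      have := heq hw
      simpa [h0, smul_eq_mul, mul_comm] using this
    refine ⟨fun w => a⁻¹ * w, ?_, ?_, ?_, 0, by simp, h0⟩
    · exact ((differentiable_const _).mul differentiable_id).differentiableOn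
    · intro w hw
      simp only [mem_ball_zero_iff] at hw ⊢
      rw [norm_mul, norm_inv, ha1]
      simpa using hw
    · intro w hw
      constructor
      · rw [hφ' w hw]; field_simp
      · have hmem : a⁻¹ * w ∈ ball (0:ℂ) 1 := by
          simp only [mem_ball_zero_iff] at hw ⊢
          rw [norm_mul, norm_inv, ha1]
          simpa using hw
        rw [hφ' _ hmem]; field_simp
  have hKsub : closedBall (0:ℂ) ρ ⊆ ball 0 1 := closedBall_subset_ball hρ1
  have hgc : ContinuousOn g (closedBall (0:ℂ) ρ) :=
    (((Complex.differentiableOn_dslope (isOpen_ball.mem_nhds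
      (mem_ball_self one_pos))).mpr hd).continuousOn).mono hKsub
  obtain ⟨z₀, hz₀K, hz₀max⟩ := (isCompact_closedBall (0:ℂ) ρ).exists_isMaxOn
    ⟨0, mem_closedBall_self hρ0⟩ (continuous_norm.comp_continuousOn hgc)
  refine ⟨‖g z₀‖, norm_nonneg _, hg_lt z₀ (hKsub hz₀K), ?_⟩
  intro z hzρ
  have hzK : z ∈ closedBall (0:ℂ) ρ := by simpa [mem_closedBall_iff_norm] using hzρ
  rw [hφ_eq z (hKsub hzK), norm_mul, mul_comm]
  exact mul_le_mul_of_nonneg_right (hz₀max hzK) (norm_nonneg _)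

/-- Condition (1) implies mean ergodicity: for every `f` in the unit ball of
`H^∞_ν(𝔻)`, `sup_z (1/n)∑_{i=1}^n |f(φ_i z) - f 0| ν(|z|) → 0`. -/
theorem weight_condition_implies_mean_ergodic (ν : ℝ → ℝ)
    (hνc : ContinuousOn ν (Ico (0:ℝ) 1))
    (hνpos : ∀ t ∈ Ico (0:ℝ) 1, 0 < ν t)
    (hνdec : AntitoneOn ν (Ico (0:ℝ) 1))
    (hν0 : Tendsto ν (nhdsWithin 1 (Iio (1:ℝ))) (nhds 0))
    (φ : ℂ → ℂ)
    (hd : DifferentiableOn ℂ φ (ball (0:ℂ) 1))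
    (hm : MapsTo φ (ball (0:ℂ) 1) (ball (0:ℂ) 1))
    (h0 : φ 0 = 0)
    (hni : ¬ EqOn φ id (ball (0:ℂ) 1))
    (hne : ¬ IsEllipticAutomorphism φ)
    (r : ℕ → ℝ) (hr1 : ∀ n, r n < 1) (hrmono : Monotone r)
    (hrlim : Tendsto r atTop (nhds 1))
    (hcond : Tendsto (fun n : ℕ =>
        sSup {x : ℝ | ∃ z ∈ ball (0:ℂ) 1, r n < ‖z‖ ∧
          x = ν ‖z‖ / ν ‖φ^[n] z‖}) atTop (nhds 0)) :
    ∀ f : ℂ → ℂ, DifferentiableOn ℂ f (ball (0:ℂ) 1) →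
      (∀ z ∈ ball (0:ℂ) 1, ‖f z‖ * ν ‖z‖ ≤ 1) →
      Tendsto (fun n : ℕ =>
          sSup {x : ℝ | ∃ z ∈ ball (0:ℂ) 1,
            x = (n : ℝ)⁻¹ * ∑ i ∈ Icc 1 n, ‖f (φ^[i] z) - f 0‖ * ν ‖z‖})
        atTop (nhds 0) := by
  intro f hfd hfb
  have hν00 : (0:ℝ) < ν 0 := hνpos 0 ⟨le_refl 0, one_pos⟩
  have hBall : ∀ (i : ℕ) (z : ℂ), z ∈ ball (0:ℂ) 1 → φ^[i] z ∈ ball (0:ℂ) 1 :=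
    fun i z hz => hm.iterate i hz
  have hmemIco : ∀ z ∈ ball (0:ℂ) 1, ‖z‖ ∈ Ico (0:ℝ) 1 :=
    fun z hz => ⟨norm_nonneg z, mem_ball_zero_iff.mp hz⟩
  have hschwarz : ∀ z ∈ ball (0:ℂ) 1, ‖φ z‖ ≤ ‖z‖ := by
    intro z hz
    exact Complex.norm_le_norm_of_mapsTo_ball hd (hm.mono_right ball_subset_closedBall) h0
      (mem_ball_zero_iff.mp hz)
  have hiter_anti : ∀ z ∈ ball (0:ℂ) 1, Antitone (fun i => ‖φ^[i] z‖) := by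
    intro z hz
    apply antitone_nat_of_succ_le
    intro i
    rw [Function.iterate_succ_apply']
    exact hschwarz _ (hBall i z hz)
  -- key per-term estimate
  have key : ∀ z ∈ ball (0:ℂ) 1, ∀ i j : ℕ, j ≤ i →
      ‖f (φ^[i] z) - f 0‖ * ν ‖z‖ ≤ ν ‖z‖ / ν ‖φ^[j] z‖ + ‖f 0‖ * ν ‖z‖ := by
    intro z hz i j hji
    have hwi := hBall i z hz
    have hwj := hBall j z hz
    have hνi : 0 < ν ‖φ^[i] z‖ := hνpos _ (hmemIco _ hwi)
    have hνj : 0 < ν ‖φ^[j] z‖ := hνpos _ (hmemIco _ hwj)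
    have hνz : 0 ≤ ν ‖z‖ := (hνpos _ (hmemIco _ hz)).le
    have h2 : ‖f (φ^[i] z)‖ * ν ‖z‖ ≤ ν ‖z‖ / ν ‖φ^[j] z‖ := by
      have hji' : ‖φ^[i] z‖ ≤ ‖φ^[j] z‖ := hiter_anti z hz hji
      have hν_le2 : ν ‖φ^[j] z‖ ≤ ν ‖φ^[i] z‖ :=
        hνdec (hmemIco _ hwi) (hmemIco _ hwj) hji'
      have hfle : ‖f (φ^[i] z)‖ ≤ 1 / ν ‖φ^[i] z‖ :=
        (le_div_iff₀ hνi).mpr (hfb _ hwi)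
      calc ‖f (φ^[i] z)‖ * ν ‖z‖ ≤ (1 / ν ‖φ^[i] z‖) * ν ‖z‖ :=
            mul_le_mul_of_nonneg_right hfle hνz
        _ = ν ‖z‖ / ν ‖φ^[i] z‖ := by ring
        _ ≤ ν ‖z‖ / ν ‖φ^[j] z‖ := div_le_div_of_nonneg_left hνz hνj hν_le2
    calc ‖f (φ^[i] z) - f 0‖ * ν ‖z‖
        ≤ (‖f (φ^[i] z)‖ + ‖f 0‖) * ν ‖z‖ :=
          mul_le_mul_of_nonneg_right (norm_sub_le _ _) hνz
      _ = ‖f (φ^[i] z)‖ * ν ‖z‖ + ‖f 0‖ * ν ‖z‖ := by ring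
      _ ≤ ν ‖z‖ / ν ‖φ^[j] z‖ + ‖f 0‖ * ν ‖z‖ := by linarith
  have hf0 : ‖f 0‖ * ν 0 ≤ 1 := by
    simpa using hfb 0 (mem_ball_self one_pos)
  -- trivial bound : each term ≤ 2
  have htriv : ∀ z ∈ ball (0:ℂ) 1, ∀ i : ℕ,
      ‖f (φ^[i] z) - f 0‖ * ν ‖z‖ ≤ 2 := by
    intro z hz i
    have h1 := key z hz i 0 (Nat.zero_le i)
    have hνz : 0 < ν ‖z‖ := hνpos _ (hmemIco _ hz)
    have hone : ν ‖z‖ / ν ‖φ^[0] z‖ = 1 := by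
      rw [Function.iterate_zero_apply]
      exact div_self hνz.ne'
    rw [hone] at h1
    have h3 : ‖f 0‖ * ν ‖z‖ ≤ 1 := by
      have hνz0 : ν ‖z‖ ≤ ν 0 :=
        hνdec ⟨le_refl 0, one_pos⟩ (hmemIco _ hz) (norm_nonneg z)
      calc ‖f 0‖ * ν ‖z‖ ≤ ‖f 0‖ * ν 0 :=
            mul_le_mul_of_nonneg_left hνz0 (norm_nonneg _)
        _ ≤ 1 := hf0
    linarith
  rw [Metric.tendsto_atTop]
  intro ε₀ hε₀
  set C := 1 + ‖f 0‖ with hC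
  have hC1 : (1:ℝ) ≤ C := by simp [hC, norm_nonneg]
  have hCpos : (0:ℝ) < C := lt_of_lt_of_le one_pos hC1
  set ε := ε₀ / (2 * C) with hεdef
  have hε : 0 < ε := div_pos hε₀ (by linarith)
  have hεC : ε * C = ε₀ / 2 := by
    rw [hεdef]
    field_simp
  -- choose m
  obtain ⟨m₁, hm₁⟩ := (Metric.tendsto_atTop.mp hcond) ε hε
  have hνr : Tendsto (fun n => ν (r n)) atTop (nhds 0) := by
    apply hν0.comp
    apply tendsto_nhdsWithin_of_tendsto_nhds_of_eventually_within r hrlim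
    exact Eventually.of_forall (fun n => hr1 n)
  have hev : ∀ᶠ n in atTop, ν (r n) < ε ∧ 0 < r n :=
    (hνr.eventually (eventually_lt_nhds hε)).and
      (hrlim.eventually (eventually_gt_nhds one_pos))
  obtain ⟨m₂, hm₂⟩ := eventually_atTop.mp hev
  set m := max m₁ m₂ with hmdef
  have hrm0 : 0 < r m := (hm₂ m (le_max_right _ _)).2
  have hrmε : ν (r m) < ε := (hm₂ m (le_max_right _ _)).1
  have hrmIco : r m ∈ Ico (0:ℝ) 1 := ⟨hrm0.le, hr1 m⟩
  -- ratio bound from hcond at n = m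
  have hratio : ∀ z ∈ ball (0:ℂ) 1, r m < ‖z‖ → ν ‖z‖ / ν ‖φ^[m] z‖ ≤ ε := by
    intro z hz hrz
    set T := {x : ℝ | ∃ z ∈ ball (0:ℂ) 1, r m < ‖z‖ ∧ x = ν ‖z‖ / ν ‖φ^[m] z‖} with hT
    have hbdd : BddAbove T := by
      refine ⟨1, ?_⟩
      rintro x ⟨w, hw, hrw, rfl⟩
      have hwm := hBall m w hw
      have h1 : ‖φ^[m] w‖ ≤ ‖w‖ := by
        simpa using hiter_anti w hw (Nat.zero_le m)
      have h2 : ν ‖w‖ ≤ ν ‖φ^[m] w‖ := hνdec (hmemIco _ hwm) (hmemIco _ hw) h1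
      exact div_le_one_of_le₀ h2 (hνpos _ (hmemIco _ hwm)).le
    have hmem : ν ‖z‖ / ν ‖φ^[m] z‖ ∈ T := ⟨z, hz, hrz, rfl⟩
    have hle := le_csSup hbdd hmem
    have hlt : sSup T < ε := by
      have hd1 := hm₁ m (le_max_left _ _)
      rw [Real.dist_eq, sub_zero] at hd1
      exact lt_of_le_of_lt (le_abs_self _) hd1
    linarith
  -- contraction and uniform convergence on closed ball r m
  obtain ⟨c, hc0, hc1, hcφ⟩ := aux_contraction hd hm h0 hne hrm0.le (hr1 m)
  have hiterc : ∀ (i : ℕ) (z : ℂ), ‖z‖ ≤ r m → ‖φ^[i] z‖ ≤ r m ∧ ‖φ^[i] z‖ ≤ c ^ i := by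
    intro i
    induction i with
    | zero =>
      intro z hz
      exact ⟨by simpa using hz, by simpa using hz.trans (hr1 m).le⟩
    | succ i ih =>
      intro z hz
      obtain ⟨h1, h2⟩ := ih z hz
      rw [Function.iterate_succ_apply']
      have hstep := hcφ _ h1
      constructor
      · calc ‖φ (φ^[i] z)‖ ≤ c * ‖φ^[i] z‖ := hstep
          _ ≤ 1 * r m := mul_le_mul hc1.le h1 (norm_nonneg _) zero_le_one
          _ = r m := one_mul _
      · calc ‖φ (φ^[i] z)‖ ≤ c * ‖φ^[i] z‖ := hstep
          _ ≤ c * c ^ i := mul_le_mul_of_nonneg_left h2 hc0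
          _ = c ^ (i + 1) := (pow_succ' c i).symm
  -- continuity of f at 0
  have hfc : ContinuousAt f 0 :=
    hfd.continuousOn.continuousAt (isOpen_ball.mem_nhds (mem_ball_self one_pos))
  obtain ⟨δ, hδ, hδf⟩ := Metric.continuousAt_iff.mp hfc (ε / ν 0) (div_pos hε hν00)
  obtain ⟨N₁, hN₁⟩ := eventually_atTop.mp
    ((tendsto_pow_atTop_nhds_zero_of_lt_one hc0 hc1).eventually (eventually_lt_nhds hδ))
  set N := max (max N₁ m) 1 with hNdef
  have hN1 : 1 ≤ N := le_max_right _ _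
  have hmN : m ≤ N := le_trans (le_max_right N₁ m) (le_max_left _ _)
  have hN₁N : N₁ ≤ N := le_trans (le_max_left N₁ m) (le_max_left _ _)
  -- main term bound for i ≥ N
  have hterm : ∀ z ∈ ball (0:ℂ) 1, ∀ i : ℕ, N ≤ i →
      ‖f (φ^[i] z) - f 0‖ * ν ‖z‖ ≤ ε * C := by
    intro z hz i hi
    by_cases hcase : r m < ‖z‖
    · have hkey := key z hz i m (le_trans hmN hi)
      have hνzε : ν ‖z‖ ≤ ε :=
        le_trans (hνdec hrmIco (hmemIco _ hz) hcase.le) hrmε.le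
      have h2 : ‖f 0‖ * ν ‖z‖ ≤ ‖f 0‖ * ε :=
        mul_le_mul_of_nonneg_left hνzε (norm_nonneg _)
      have h1 := hratio z hz hcase
      calc ‖f (φ^[i] z) - f 0‖ * ν ‖z‖
          ≤ ν ‖z‖ / ν ‖φ^[m] z‖ + ‖f 0‖ * ν ‖z‖ := hkey
        _ ≤ ε + ‖f 0‖ * ε := add_le_add h1 h2
        _ = ε * C := by rw [hC]; ring
    · push_neg at hcase
      have hsmall : ‖φ^[i] z‖ < δ :=
        lt_of_le_of_lt (hiterc i z hcase).2 (hN₁ i (le_trans hN₁N hi))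
      have hdist : dist (f (φ^[i] z)) (f 0) < ε / ν 0 := by
        apply hδf
        simpa [dist_zero_right] using hsmall
      rw [dist_eq_norm] at hdist
      have hνz0 : ν ‖z‖ ≤ ν 0 :=
        hνdec ⟨le_refl 0, one_pos⟩ (hmemIco _ hz) (norm_nonneg z)
      calc ‖f (φ^[i] z) - f 0‖ * ν ‖z‖
          ≤ (ε / ν 0) * ν 0 :=
            mul_le_mul hdist.le hνz0 (hνpos _ (hmemIco _ hz)).le
              (div_nonneg hε.le hν00.le)
        _ = ε := div_mul_cancel₀ _ hν00.ne'
        _ ≤ ε * C := le_mul_of_one_le_right hε.le hC1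
  -- upper bound for elements of S n
  have hub : ∀ n : ℕ, N ≤ n → ∀ x ∈ {x : ℝ | ∃ z ∈ ball (0:ℂ) 1,
      x = (n : ℝ)⁻¹ * ∑ i ∈ Icc 1 n, ‖f (φ^[i] z) - f 0‖ * ν ‖z‖},
      x ≤ (n:ℝ)⁻¹ * (2 * N) + ε₀ / 2 := by
    rintro n hn x ⟨z, hz, rfl⟩
    have hn0 : 0 < n := lt_of_lt_of_le (lt_of_lt_of_le Nat.zero_lt_one hN1) hn
    have hnR : (0:ℝ) < n := by exact_mod_cast hn0
    have hsplit : ∑ i ∈ Icc 1 n, ‖f (φ^[i] z) - f 0‖ * ν ‖z‖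
        = ∑ i ∈ Ioc 0 N, ‖f (φ^[i] z) - f 0‖ * ν ‖z‖
          + ∑ i ∈ Ioc N n, ‖f (φ^[i] z) - f 0‖ * ν ‖z‖ := by
      have hIcc : Finset.Icc 1 n = Finset.Ioc 0 n := Finset.Icc_add_one_left_eq_Ioc 0 n
      rw [hIcc, Finset.sum_Ioc_consecutive _ (Nat.zero_le N) hn]
    have hb1 : ∑ i ∈ Ioc 0 N, ‖f (φ^[i] z) - f 0‖ * ν ‖z‖ ≤ 2 * N := by
      calc ∑ i ∈ Ioc 0 N, ‖f (φ^[i] z) - f 0‖ * ν ‖z‖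
          ≤ ∑ _i ∈ Ioc 0 N, (2:ℝ) := Finset.sum_le_sum (fun i _ => htriv z hz i)
        _ = (N:ℝ) * 2 := by simp [Nat.card_Ioc]
        _ = 2 * N := by ring
    have hb2 : ∑ i ∈ Ioc N n, ‖f (φ^[i] z) - f 0‖ * ν ‖z‖ ≤ (n:ℝ) * (ε * C) := by
      calc ∑ i ∈ Ioc N n, ‖f (φ^[i] z) - f 0‖ * ν ‖z‖
          ≤ ∑ _i ∈ Ioc N n, (ε * C) :=
            Finset.sum_le_sum (fun i hi => hterm z hz i (le_of_lt (Finset.mem_Ioc.mp hi).1))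
        _ = ((n - N : ℕ):ℝ) * (ε * C) := by simp [Nat.card_Ioc]
        _ ≤ (n:ℝ) * (ε * C) := by
            apply mul_le_mul_of_nonneg_right _ (mul_nonneg hε.le hCpos.le)
            exact_mod_cast Nat.sub_le n N
    calc (n:ℝ)⁻¹ * ∑ i ∈ Icc 1 n, ‖f (φ^[i] z) - f 0‖ * ν ‖z‖
        ≤ (n:ℝ)⁻¹ * (2 * N + (n:ℝ) * (ε * C)) := by
          apply mul_le_mul_of_nonneg_left _ (inv_nonneg.mpr hnR.le)
          rw [hsplit]; linarith
      _ = (n:ℝ)⁻¹ * (2 * N) + ε * C := by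
          field_simp
      _ = (n:ℝ)⁻¹ * (2 * N) + ε₀ / 2 := by rw [hεC]
  -- final choice of N₂
  refine ⟨max N (Nat.floor (4 * (N:ℝ) / ε₀) + 1), fun n hn => ?_⟩
  have hnN : N ≤ n := le_trans (le_max_left _ _) hn
  have hn0 : 0 < n := lt_of_lt_of_le (lt_of_lt_of_le Nat.zero_lt_one hN1) hnN
  have hnR : (0:ℝ) < n := by exact_mod_cast hn0
  have hn4 : 4 * (N:ℝ) / ε₀ < (n:ℝ) := by
    have h1 : 4 * (N:ℝ) / ε₀ < (Nat.floor (4 * (N:ℝ) / ε₀) + 1 : ℕ) := by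
      push_cast
      exact Nat.lt_floor_add_one _
    have h2 : ((Nat.floor (4 * (N:ℝ) / ε₀) + 1 : ℕ) : ℝ) ≤ (n:ℝ) := by
      exact_mod_cast le_trans (le_max_right N _) hn
    linarith
  have hsmall2 : (n:ℝ)⁻¹ * (2 * N) < ε₀ / 2 := by
    have h4 : 4 * (N:ℝ) < ε₀ * n := by
      rw [div_lt_iff₀ hε₀] at hn4
      linarith
    rw [inv_mul_lt_iff₀ hnR]
    linarith
  have hub' := hub n hnN
  have hmem0 : (0:ℝ) ∈ {x : ℝ | ∃ z ∈ ball (0:ℂ) 1,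
      x = (n : ℝ)⁻¹ * ∑ i ∈ Icc 1 n, ‖f (φ^[i] z) - f 0‖ * ν ‖z‖} := by
    refine ⟨0, mem_ball_self one_pos, ?_⟩
    simp [Function.iterate_fixed h0]
  have hboundpos : (0:ℝ) ≤ (n:ℝ)⁻¹ * (2 * N) + ε₀ / 2 := by
    have : (0:ℝ) ≤ (n:ℝ)⁻¹ * (2 * N) :=
      mul_nonneg (inv_nonneg.mpr hnR.le) (by positivity)
    linarith
  have hsup_le : sSup {x : ℝ | ∃ z ∈ ball (0:ℂ) 1,
      x = (n : ℝ)⁻¹ * ∑ i ∈ Icc 1 n, ‖f (φ^[i] z) - f 0‖ * ν ‖z‖}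
      ≤ (n:ℝ)⁻¹ * (2 * N) + ε₀ / 2 := Real.sSup_le hub' hboundpos
  have hsup_ge : (0:ℝ) ≤ sSup {x : ℝ | ∃ z ∈ ball (0:ℂ) 1,
      x = (n : ℝ)⁻¹ * ∑ i ∈ Icc 1 n, ‖f (φ^[i] z) - f 0‖ * ν ‖z‖} :=
    le_csSup ⟨(n:ℝ)⁻¹ * (2 * N) + ε₀ / 2, hub'⟩ hmem0
  rw [Real.dist_eq, sub_zero, abs_of_nonneg hsup_ge]
  calc sSup _ ≤ (n:ℝ)⁻¹ * (2 * N) + ε₀ / 2 := hsup_le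
    _ < ε₀ / 2 + ε₀ / 2 := by linarith
    _ = ε₀ := by ring
end
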